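/- arXiv:1409.7044 — 6 statements merged into one kernel-verified Lean document; each statement's English description precedes it below -/
import Mathlib

section
/- If S ⊆ Bin(X) is a distributive set (every pair ∗α, ∗β ∈ S, allowing ∗α = ∗β, satisfies (a∗α b)∗β c = (a∗β c)∗α(b∗β c)) and ∗ ∈ S is invertible in the monoid Bin(X), then S ∪ {∗⁻¹} is also a distributive set. -/
/-- Binary operations on `X`. -/
def BinOp (X : Type*) : Type _ := X → X → X

/-- Composition in `Bin X`: `a (∗₁∗₂) b = (a ∗₁ b) ∗₂ b`. -/
def binComp {X : Type*} (f g : BinOp X) : BinOp X := fun a b => g (f a b) b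

/-- The right-trivial operation `a ∗₀ b = a`. -/
def binId (X : Type*) : BinOp X := fun a _ => a

/-- `S` is a distributive set: every pair of its elements (including equal ones) satisfies
mutual right distributivity `(a ∗α b) ∗β c = (a ∗β c) ∗α (b ∗β c)`. -/
def IsDistribSet {X : Type*} (S : Set (BinOp X)) : Prop :=
  ∀ f ∈ S, ∀ g ∈ S, ∀ a b c : X, g (f a b) c = f (g a c) (g b c)

/-! If `∗` distributes over `⋆`, applying the bijection `x ↦ x ∗ c` shows that `∗⁻¹` does too;
and if `⋆` distributes over `∗`, then rewriting `a = (a ∗⁻¹ b) ∗ b` and distributing shows that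
`⋆` distributes over `∗⁻¹`. Combining the two gives self-distributivity of `∗⁻¹`. -/

namespace BinOp

variable {X : Type*}

def DistribOver (h g : BinOp X) : Prop :=
  ∀ a b c : X, h (g a b) c = g (h a c) (h b c)

theorem binComp_eq_binId_iff {f g : BinOp X} : binComp f g = binId X ↔ ∀ a b, g (f a b) b = a :=
  ⟨fun h a b => congrFun₂ h a b, fun h => funext₂ h⟩

theorem isDistribSet_iff {S : Set (BinOp X)} :
    IsDistribSet S ↔ ∀ g ∈ S, ∀ h ∈ S, h.DistribOver g :=
  Iff.rfl

variable {f finv : BinOp X}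

theorem DistribOver.inv_left {g : BinOp X} (hfg : f.DistribOver g)
    (hinv₁ : binComp f finv = binId X) (hinv₂ : binComp finv f = binId X) :
    finv.DistribOver g := by
  rw [binComp_eq_binId_iff] at hinv₁ hinv₂
  intro a b c
  have hinj : Function.Injective (f · c) := fun x y hxy => by
    simpa only [hinv₁] using congrArg (finv · c) hxy
  apply hinj
  simp only [hinv₂]
  rw [hfg, hinv₂, hinv₂]

theorem DistribOver.inv_right {h : BinOp X} (hhf : h.DistribOver f)
    (hinv₁ : binComp f finv = binId X) (hinv₂ : binComp finv f = binId X) :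
    h.DistribOver finv := by
  rw [binComp_eq_binId_iff] at hinv₁ hinv₂
  intro a b c
  conv_rhs => rw [← hinv₂ a b, hhf, hinv₁]

end BinOp

open BinOp in
/-- If `S ⊆ Bin(X)` is a distributive set and `∗ ∈ S` is invertible in the monoid `Bin(X)`,
then `S ∪ {∗⁻¹}` is also a distributive set. -/
theorem stmt2 {X : Type*} (S : Set (BinOp X)) (hS : IsDistribSet S)
    (f finv : BinOp X) (hf : f ∈ S)
    (hinv₁ : binComp f finv = binId X) (hinv₂ : binComp finv f = binId X) :
    IsDistribSet (S ∪ {finv}) := by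
  rw [isDistribSet_iff] at hS ⊢
  rintro g (hg | rfl) h (hh | rfl)
  · exact hS g hg h hh
  · exact (hS g hg f hf).inv_left hinv₁ hinv₂
  · exact (hS f hf h hh).inv_right hinv₁ hinv₂
  · exact ((hS f hf f hf).inv_right hinv₁ hinv₂).inv_left hinv₁ hinv₂
end

section
/- If S ⊆ Bin(X) is an entropic set and ∗ ∈ S is invertible in the monoid Bin(X), then S ∪ {∗⁻¹} is also an entropic set. -/
/-- `S` is an entropic set: any pair `∗α, ∗β ∈ S` (possibly equal) satisfies
`(a ∗α b) ∗β (c ∗α d) = (a ∗β c) ∗α (b ∗β d)`. -/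
def IsEntropicSet {X : Type*} (S : Set (BinOp X)) : Prop :=
  ∀ f ∈ S, ∀ g ∈ S, ∀ a b c d : X, g (f a b) (f c d) = f (g a c) (g b d)

namespace BinOp

variable {X : Type*}

def Entropic (f g : BinOp X) : Prop :=
  ∀ a b c d : X, g (f a b) (f c d) = f (g a c) (g b d)

theorem Entropic.symm {f g : BinOp X} (h : Entropic f g) : Entropic g f :=
  fun a b c d => (h a c b d).symm

theorem binComp_apply_of_eq_binId {f g : BinOp X} (h : binComp f g = binId X) (a b : X) :
    g (f a b) b = a :=
  congrFun (congrFun h a) b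

theorem Entropic.inverse {f finv g : BinOp X} (hgf : Entropic g f)
    (hinv₁ : binComp f finv = binId X) (hinv₂ : binComp finv f = binId X) :
    Entropic g finv := by
  have cancel_f : ∀ {p p'} q, f p q = f p' q → p = p' := fun {p p'} q h => by
    rw [← binComp_apply_of_eq_binId hinv₁ p q, h, binComp_apply_of_eq_binId hinv₁]
  intro a b c d
  apply cancel_f (g c d)
  rw [hgf, binComp_apply_of_eq_binId hinv₂, binComp_apply_of_eq_binId hinv₂,
    binComp_apply_of_eq_binId hinv₂]

end BinOp

open BinOp

theorem IsEntropicSet.union_singleton {X : Type*} {S : Set (BinOp X)} {h : BinOp X}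
    (hS : IsEntropicSet S) (hSh : ∀ g ∈ S, Entropic g h) (hh : Entropic h h) :
    IsEntropicSet (S ∪ {h}) := by
  rintro g (hg | rfl) g' (hg' | rfl)
  exacts [hS g hg g' hg', hSh g hg, (hSh g' hg').symm, hh]

/-- If `S ⊆ Bin(X)` is an entropic set and `∗ ∈ S` is invertible in the monoid `Bin(X)`,
then `S ∪ {∗⁻¹}` is also an entropic set. -/
theorem stmt4 {X : Type*} (S : Set (BinOp X)) (hS : IsEntropicSet S)
    (f finv : BinOp X) (hf : f ∈ S)
    (hinv₁ : binComp f finv = binId X) (hinv₂ : binComp finv f = binId X) :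
    IsEntropicSet (S ∪ {finv}) := by
  have with_S : ∀ g ∈ S, Entropic g finv := fun g hg =>
    Entropic.inverse (hS g hg f hf) hinv₁ hinv₂
  have self : Entropic finv finv := (with_S f hf).symm.inverse hinv₁ hinv₂
  exact hS.union_singleton with_S self
end

section
/- If S ⊆ Bin(X) is an entropic set, then the submonoid of Bin(X) generated by S is also entropic. -/
/-- The monoid `Bin(X)` with composition `a(∗₁∗₂)b = (a∗₁b)∗₂b` and identity `a∗₀b = a`. -/
instance {X : Type*} : Monoid (BinOp X) where
  mul f g := fun a b => g (f a b) b
  one := fun a _ => a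
  mul_assoc _ _ _ := rfl
  one_mul _ := rfl
  mul_one _ := rfl

/-! Being entropic is a symmetric relation between two operations, and the operations
entropic with every member of a set `T` form a submonoid, as for centralizers in a monoid.
Hence `S` lies in the "entropic centralizer" of `S`, so does `⟨S⟩`; by symmetry `S` lies in
that of `⟨S⟩`, and then so does `⟨S⟩`. -/

namespace BinOp

variable {X : Type*}

theorem entropic_one (f : BinOp X) : Entropic f 1 :=
  fun _ _ _ _ => rfl

theorem Entropic.mul {f g g' : BinOp X} (hg : Entropic f g) (hg' : Entropic f g') :
    Entropic f (g * g') := by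
  intro a b c d
  show g' (g (f a b) (f c d)) (f c d) = f (g' (g a c) c) (g' (g b d) d)
  rw [hg, hg']

def entropicCentralizer (T : Set (BinOp X)) : Submonoid (BinOp X) where
  carrier := {g | ∀ f ∈ T, Entropic f g}
  one_mem' f _ := entropic_one f
  mul_mem' hg hg' f hf := (hg f hf).mul (hg' f hf)

theorem isEntropicSet_iff_subset_entropicCentralizer (S : Set (BinOp X)) :
    IsEntropicSet S ↔ S ⊆ entropicCentralizer S :=
  ⟨fun h _ hg f hf => h f hf _ hg, fun h f hf _ hg => h hg f hf⟩

theorem subset_entropicCentralizer_comm {S T : Set (BinOp X)} (h : S ⊆ entropicCentralizer T) :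
    T ⊆ entropicCentralizer S :=
  fun _ hf _ hg => (h hg _ hf).symm

end BinOp

/-- If `S ⊆ Bin(X)` is an entropic set, then the submonoid of `Bin(X)` generated by `S`
is also entropic. -/
theorem stmt5 {X : Type*} (S : Set (BinOp X)) (hS : IsEntropicSet S) :
    IsEntropicSet (Submonoid.closure S : Set (BinOp X)) := by
  rw [BinOp.isEntropicSet_iff_subset_entropicCentralizer] at hS ⊢
  have hclosure : Submonoid.closure S ≤ BinOp.entropicCentralizer S :=
    Submonoid.closure_le.mpr hS
  exact Submonoid.closure_le.mpr (BinOp.subset_entropicCentralizer_comm hclosure)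
end

section
/- In a multi-quandle (in fact in any multi-rack with idempotent operations closed under pairwise distributivity), any two operations of a distributive set S in which every element is idempotent-and-invertible commute in Bin(X); consequently, if ∗₁ⁿ = ∗₀ and ∗₂ⁿ = ∗₀ then (∗₁∗₂)ⁿ = ∗₀. -/
/-! If `∗₂` distributes over `∗₁` and is idempotent, then
`(a ∗₁ b) ∗₂ b = (a ∗₂ b) ∗₁ (b ∗₂ b) = (a ∗₂ b) ∗₁ b`, which says `∗₁∗₂ = ∗₂∗₁` in `Bin(X)`.
Commuting elements of order dividing `n` have a product of order dividing `n`. -/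

namespace BinOp

variable {X : Type*}

theorem mul_apply (f g : BinOp X) (a b : X) : (f * g) a b = g (f a b) b := rfl

theorem commute_of_distrib_of_idem {f g : BinOp X}
    (hdistrib : ∀ a b c : X, g (f a b) c = f (g a c) (g b c)) (hidem : ∀ a : X, g a a = a) :
    Commute f g := by
  funext a b
  rw [mul_apply, mul_apply, hdistrib, hidem]

end BinOp

theorem IsDistribSet.commute {X : Type*} {S : Set (BinOp X)} (hS : IsDistribSet S)
    (hidem : ∀ f ∈ S, ∀ a : X, f a a = a) {f g : BinOp X} (hf : f ∈ S) (hg : g ∈ S) :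
    Commute f g :=
  BinOp.commute_of_distrib_of_idem (hS f hf g hg) (hidem g hg)

theorem Commute.mul_pow_eq_one {M : Type*} [Monoid M] {x y : M} (h : Commute x y) {n : ℕ}
    (hx : x ^ n = 1) (hy : y ^ n = 1) : (x * y) ^ n = 1 := by
  rw [h.mul_pow, hx, hy, one_mul]

theorem stmt6_general {X : Type*} (S : Set (BinOp X)) (hS : IsDistribSet S)
    (hidem : ∀ f ∈ S, ∀ a : X, f a a = a) :
    (∀ f ∈ S, ∀ g ∈ S, f * g = g * f) ∧
    (∀ f ∈ S, ∀ g ∈ S, ∀ n : ℕ, f ^ n = 1 → g ^ n = 1 → (f * g) ^ n = 1) :=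
  ⟨fun _ hf _ hg => hS.commute hidem hf hg,
    fun _ hf _ hg _ => (hS.commute hidem hf hg).mul_pow_eq_one⟩

/-- In a multi-quandle (a distributive set `S` all of whose elements are invertible and
idempotent), any two operations of `S` commute in `Bin(X)`; consequently if
`∗₁ⁿ = ∗₀` and `∗₂ⁿ = ∗₀` then `(∗₁∗₂)ⁿ = ∗₀`. -/
theorem stmt6 {X : Type*} (S : Set (BinOp X)) (hS : IsDistribSet S)
    (hinv : ∀ f ∈ S, ∃ g : BinOp X, f * g = 1 ∧ g * f = 1)
    (hidem : ∀ f ∈ S, ∀ a : X, f a a = a) :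
    (∀ f ∈ S, ∀ g ∈ S, f * g = g * f) ∧
    (∀ f ∈ S, ∀ g ∈ S, ∀ n : ℕ, f ^ n = 1 → g ^ n = 1 → (f * g) ^ n = 1) :=
  stmt6_general S hS hidem
end

section
/- For any group G, the map g ↦ ∗g, where a ∗g b = a b⁻¹ g b, is an injective monoid homomorphism from G into Bin(G); moreover its image is a distributive set, so G embeds as a distributive group of binary operations on itself. -/
/-- Half-conjugacy: `a ∗g b = a·b⁻¹·g·b`. -/
def halfConj {G : Type*} [Group G] (g : G) : BinOp G := fun a b => a * b⁻¹ * g * b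

/-! For fixed `b`, `a ↦ a ∗g b` is right multiplication by the conjugate `b⁻¹ g b`, so composing
`∗g` and `∗h` multiplies by `b⁻¹ (g h) b`. For distributivity put `k = c⁻¹ h c`: both sides equal
`a · b⁻¹ g b · k`, since `(b k)⁻¹ g (b k) = k⁻¹ (b⁻¹ g b) k`. -/

section HalfConj

variable {G : Type*} [Group G]

theorem binComp_halfConj (g h : G) :
    binComp (halfConj g) (halfConj h) = halfConj (g * h) := by
  funext a b
  simp only [binComp, halfConj]
  group

theorem halfConj_one_eq_binId : halfConj (1 : G) = binId G := by
  funext a b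
  simp only [halfConj, binId]
  group

theorem halfConj_apply_one_one (g : G) : halfConj g 1 1 = g := by
  simp only [halfConj, inv_one, one_mul, mul_one]

theorem halfConj_injective : Function.Injective (halfConj (G := G)) := fun g h hgh => by
  rw [← halfConj_apply_one_one g, ← halfConj_apply_one_one h, hgh]

theorem halfConj_halfConj_right_distrib (g h a b c : G) :
    halfConj h (halfConj g a b) c = halfConj g (halfConj h a c) (halfConj h b c) := by
  simp only [halfConj]
  group

end HalfConj

/-- For any group `G`, the map `g ↦ ∗g`, `a ∗g b = a b⁻¹ g b`, is an injective monoid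
homomorphism from `G` into `Bin(G)`, and its image is a distributive set: so `G` embeds
as a distributive group of binary operations on itself. -/
theorem stmt7 (G : Type*) [Group G] :
    (∀ g h : G, binComp (halfConj g) (halfConj h) = halfConj (g * h)) ∧
    (halfConj (1 : G) = binId G) ∧
    (Function.Injective (halfConj (G := G))) ∧
    (∀ g h : G, ∀ a b c : G,
      halfConj h (halfConj g a b) c = halfConj g (halfConj h a c) (halfConj h b c)) :=
  ⟨binComp_halfConj, halfConj_one_eq_binId, halfConj_injective,
    halfConj_halfConj_right_distrib⟩
end

section
/- Let (Cₙ, dᵢ, sᵢ) be a simplicial module (satisfying in particular (2'') s_{p−1}s_{p−1} = sₚs_{p−1}, (3), and (4) dᵢsᵢ = d_{i+1}sᵢ = Id). Then (∂sₚ + sₚ∂)sₚ ≡ (−1)ᵖ sₚ modulo the submodule 2·s_{p−1}(C_{n−1}) + s_{p−1}(C_{n−1}), i.e. sₚ is a chain homotopy between (−1)ᵖId and 0 on the graded piece F^p/F^{p−1} of the degenerate filtration; consequently each graded piece F^p/F^{p−1} is acyclic, and the degenerate subcomplex (C^D_n, ∂) is acyclic (Eilenberg–Mac Lane). -/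
/-- The boundary `∂ₙ = Σ_{i=0}^{n+1} (−1)ⁱ dᵢ : C_{n+1} → Cₙ` of a family of face maps. -/
noncomputable def sBdry {k : Type*} [CommRing k] {C : ℕ → Type*}
    [∀ n, AddCommGroup (C n)] [∀ n, Module k (C n)]
    (d : ∀ n, ℕ → (C (n + 1) →ₗ[k] C n)) (n : ℕ) : C (n + 1) →ₗ[k] C n :=
  ∑ i ∈ Finset.range (n + 2), ((-1 : k) ^ i) • d n i

/-!
With `h = ∂sₚ + sₚ∂`, the simplicial identities give `h(sₚw) = (−1)ᵖsₚw + 2s_{p−1}(⋯)`, and `h`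
preserves `Fᵖ = s₀C + ⋯ + s_{p−1}C` because `Fᵖ` is a subcomplex and `sₚFᵖ ⊆ Fᵖ`. Hence
`x − (−1)ᵖh x ∈ Fᵖ` for `x ∈ F^{p+1}`. For a cycle `x` this reads `x ≡ (−1)ᵖ∂(sₚx)` modulo a cycle
of `Fᵖ`, so by induction on `p` every degenerate cycle bounds a degenerate chain.
-/

open Finset

theorem Submodule.sum_mem_of_add_eq_zero {R M : Type*} [Semiring R] [AddCommMonoid M] [Module R M]
    {S : Submodule R M} {ι : Type*} [DecidableEq ι] {t : Finset ι} {f : ι → M} {a b : ι}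
    (ha : a ∈ t) (hb : b ∈ t) (hab : a ≠ b) (hcancel : f a + f b = 0)
    (hrest : ∀ i ∈ t, i ≠ a → i ≠ b → f i ∈ S) : ∑ i ∈ t, f i ∈ S := by
  rw [← add_sum_erase t f ha, ← add_sum_erase _ f (mem_erase.2 ⟨hab.symm, hb⟩), ← add_assoc,
    hcancel, zero_add]
  refine S.sum_mem fun i hi => ?_
  simp only [mem_erase] at hi
  exact hrest i hi.2.2 hi.2.1 hi.1

section SimplicialModule

variable {k : Type*} [CommRing k] {C : ℕ → Type*} [∀ n, AddCommGroup (C n)] [∀ n, Module k (C n)]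
  (d : ∀ n, ℕ → (C (n + 1) →ₗ[k] C n)) (s : ∀ n, ℕ → (C n →ₗ[k] C (n + 1)))

def FaceCompFace : Prop :=
  ∀ n i j, i < j → j ≤ n + 2 → ∀ x, d n i (d (n + 1) j x) = d n (j - 1) (d (n + 1) i x)

def DegenCompDegen : Prop :=
  ∀ n i j, i ≤ j → j ≤ n → ∀ x, s (n + 1) i (s n j x) = s (n + 1) (j + 1) (s n i x)

def FaceCompDegenOfLt : Prop :=
  ∀ n i j, i < j → j ≤ n + 1 → ∀ x, d (n + 1) i (s (n + 1) j x) = s n (j - 1) (d n i x)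

def FaceCompDegenOfGt : Prop :=
  ∀ n i j, j + 1 < i → i ≤ n + 2 → ∀ x, d (n + 1) i (s (n + 1) j x) = s n j (d n (i - 1) x)

def FaceCompDegenSelf : Prop :=
  ∀ n i, i ≤ n + 1 → ∀ x, d (n + 1) i (s (n + 1) i x) = x ∧ d (n + 1) (i + 1) (s (n + 1) i x) = x

@[simp]
lemma sBdry_apply (n : ℕ) (x : C (n + 1)) :
    sBdry d n x = ∑ i ∈ range (n + 2), (-1 : k) ^ i • d n i x := by
  simp [sBdry]

-- `degenFiltration s n p = s₀Cₙ + ⋯ + s_{p-1}Cₙ` is the paper's `F^{p-1}_{n+1}`, so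
-- `degenFiltration s n (n + 1)` is the degenerate part `C^D_{n+1}`.
def degenFiltration (n p : ℕ) : Submodule k (C (n + 1)) :=
  ⨆ i ∈ range p, LinearMap.range (s n i)

@[simp]
lemma degenFiltration_zero (n : ℕ) : degenFiltration s n 0 = ⊥ := by
  simp [degenFiltration]

lemma degenFiltration_succ (n p : ℕ) :
    degenFiltration s n (p + 1) = degenFiltration s n p ⊔ LinearMap.range (s n p) := by
  simp only [degenFiltration, range_add_one, Finset.iSup_insert, sup_comm]

lemma degen_mem_degenFiltration {n p i : ℕ} (hi : i < p) (w : C n) :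
    s n i w ∈ degenFiltration s n p :=
  le_iSup₂ (f := fun i (_ : i ∈ range p) => LinearMap.range (s n i)) i (mem_range.2 hi) ⟨w, rfl⟩

lemma degenFiltration_le_iff {n p : ℕ} {S : Submodule k (C (n + 1))} :
    degenFiltration s n p ≤ S ↔ ∀ i < p, ∀ w, s n i w ∈ S := by
  simp [degenFiltration, LinearMap.range_le_iff_comap, Submodule.eq_top_iff']

variable {d s}

lemma sBdry_sBdry (hd : FaceCompFace d) (n : ℕ) (x : C (n + 2)) :
    sBdry d n (sBdry d (n + 1) x) = 0 := by
  simp only [sBdry_apply, map_sum, map_smul, smul_sum, smul_smul, ← pow_add]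
  rw [← sum_product', ← sum_filter_add_sum_filter_not _ (fun ji : ℕ × ℕ => ji.2 < ji.1),
    ← sub_neg_eq_add, sub_eq_zero, ← sum_neg_distrib]
  -- the term `(j, i)` with `i < j` cancels `(i, j - 1)` since `dᵢdⱼ = d_{j-1}dᵢ`
  refine sum_nbij' (fun ji => (ji.2, ji.1 - 1)) (fun ji => (ji.2 + 1, ji.1)) ?_ ?_ ?_ ?_ ?_ <;>
    rintro ⟨j, i⟩ h <;>
    simp only [mem_filter, mem_product, mem_range, Prod.mk.injEq, and_true, true_and] at h ⊢
  any_goals omega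
  obtain ⟨j, rfl⟩ : ∃ j', j = j' + 1 := ⟨j - 1, by omega⟩
  rw [hd n i (j + 1) h.2 (by omega), Nat.add_sub_cancel, ← neg_smul]
  congr 1
  ring

lemma sBdry_mem_degenFiltration (hlt : FaceCompDegenOfLt d s) (hgt : FaceCompDegenOfGt d s)
    (hid : FaceCompDegenSelf d s) {n p : ℕ} (hp : p ≤ n + 2) {x : C (n + 2)}
    (hx : x ∈ degenFiltration s (n + 1) p) : sBdry d (n + 1) x ∈ degenFiltration s n p := by
  refine (degenFiltration_le_iff s (S := (degenFiltration s n p).comap (sBdry d (n + 1)))).2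
    (fun j hj w => ?_) hx
  rw [Submodule.mem_comap, sBdry_apply]
  refine Submodule.sum_mem_of_add_eq_zero (a := j) (b := j + 1) (by simp; omega) (by simp; omega)
    (by omega) ?_ fun i hi hij hij' => ?_
  · rw [(hid n j (by omega) w).1, (hid n j (by omega) w).2, pow_succ, mul_neg_one, neg_smul,
      add_neg_cancel]
  · rw [mem_range] at hi
    rcases Nat.lt_or_gt_of_ne hij with hij | hij
    · rw [hlt n i j hij (by omega)]
      exact Submodule.smul_mem _ _ (degen_mem_degenFiltration s (by omega) _)
    · rw [hgt n i j (by omega) (by omega)]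
      exact Submodule.smul_mem _ _ (degen_mem_degenFiltration s hj _)

lemma degen_mem_degenFiltration_of_mem (hss : DegenCompDegen s) {n p : ℕ} (hp : p ≤ n + 1)
    {x : C (n + 1)} (hx : x ∈ degenFiltration s n p) :
    s (n + 1) p x ∈ degenFiltration s (n + 1) p := by
  refine (degenFiltration_le_iff s (S := (degenFiltration s (n + 1) p).comap (s (n + 1) p))).2
    (fun j hj w => ?_) hx
  rw [Submodule.mem_comap, show p = p - 1 + 1 by omega, ← hss n j (p - 1) (by omega) (by omega)]
  exact degen_mem_degenFiltration s (by omega) _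

variable (d s) in
noncomputable def sHomotopy (n p : ℕ) : C (n + 1) →ₗ[k] C (n + 1) :=
  sBdry d (n + 1) ∘ₗ s (n + 1) p + s n p ∘ₗ sBdry d n

lemma sHomotopy_apply (n p : ℕ) (x : C (n + 1)) :
    sHomotopy d s n p x = sBdry d (n + 1) (s (n + 1) p x) + s n p (sBdry d n x) :=
  rfl

lemma sHomotopy_mem_degenFiltration (hss : DegenCompDegen s) (hlt : FaceCompDegenOfLt d s)
    (hgt : FaceCompDegenOfGt d s) (hid : FaceCompDegenSelf d s) {n p : ℕ} (hp : p ≤ n)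
    {x : C (n + 1)} (hx : x ∈ degenFiltration s n p) :
    sHomotopy d s n p x ∈ degenFiltration s n p := by
  refine Submodule.add_mem _ (sBdry_mem_degenFiltration hlt hgt hid (by omega)
    (degen_mem_degenFiltration_of_mem hss (by omega) hx)) ?_
  rcases n with _ | n
  · obtain rfl : p = 0 := by omega
    rw [degenFiltration_zero, Submodule.mem_bot] at hx
    simp [hx]
  · exact degen_mem_degenFiltration_of_mem hss hp
      (sBdry_mem_degenFiltration hlt hgt hid (by omega) hx)

lemma sBdry_degen_apply (hlt : FaceCompDegenOfLt d s) (hgt : FaceCompDegenOfGt d s)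
    (hid : FaceCompDegenSelf d s) {n p : ℕ} (hp : p ≤ n + 1) (x : C (n + 1)) :
    sBdry d (n + 1) (s (n + 1) p x) =
      ∑ i ∈ range p, (-1 : k) ^ i • s n (p - 1) (d n i x) -
        ∑ i ∈ Ico (p + 1) (n + 2), (-1 : k) ^ i • s n p (d n i x) := by
  rw [sBdry_apply, ← sum_range_add_sum_Ico _ (show p + 2 ≤ n + 1 + 2 by omega),
    sum_range_succ, sum_range_succ, (hid n p hp x).1, (hid n p hp x).2, pow_succ, mul_neg_one,
    neg_smul, add_neg_cancel_right, ← sum_Ico_add' _ (p + 1) (n + 2) 1, sub_eq_add_neg,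
    ← sum_neg_distrib]
  congr 1
  · refine sum_congr rfl fun i hi => ?_
    rw [hlt n i p (mem_range.1 hi) hp]
  · refine sum_congr rfl fun i hi => ?_
    rw [mem_Ico] at hi
    rw [hgt n (i + 1) p (by omega) (by omega), Nat.add_sub_cancel, pow_succ, mul_neg_one,
      neg_smul]

lemma sHomotopy_apply_eq (hlt : FaceCompDegenOfLt d s) (hgt : FaceCompDegenOfGt d s)
    (hid : FaceCompDegenSelf d s) {n p : ℕ} (hp : p ≤ n + 1) (x : C (n + 1)) :
    sHomotopy d s n p x =
      ∑ i ∈ range p, (-1 : k) ^ i • s n (p - 1) (d n i x) +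
        ∑ i ∈ range (p + 1), (-1 : k) ^ i • s n p (d n i x) := by
  rw [sHomotopy_apply, sBdry_degen_apply hlt hgt hid hp, sBdry_apply, map_sum,
    ← sum_range_add_sum_Ico _ (show p + 1 ≤ n + 2 by omega)]
  simp only [map_smul]
  abel

-- Passing to degree `n + 1` makes `dₚsₚ = Id` available also for `n = 0`.
lemma degen_face_degen (hss : DegenCompDegen s) (hlt : FaceCompDegenOfLt d s) {n p i : ℕ}
    (hi : i ≤ p) (hp : p ≤ n) (w : C n) :
    s n p (d n i (s n p w)) = d (n + 1) i (s (n + 1) p (s n p w)) := by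
  rw [hss n p p le_rfl hp, hlt n i (p + 1) (by omega) (by omega), Nat.add_sub_cancel]

lemma sHomotopy_degen (hss : DegenCompDegen s) (hlt : FaceCompDegenOfLt d s)
    (hgt : FaceCompDegenOfGt d s) (hid : FaceCompDegenSelf d s) {n p : ℕ} (hp : p ≤ n)
    (w : C n) :
    sHomotopy d s n p (s n p w) =
      (-1 : k) ^ p • s n p w +
        (2 : k) • s n (p - 1) (∑ i ∈ range p, (-1 : k) ^ i • d n i (s n p w)) := by
  have hlast : s n p (d n p (s n p w)) = s n p w := by
    rw [degen_face_degen hss hlt le_rfl hp, (hid n p (by omega) _).1]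
  have hinit : ∀ i ∈ range p, s n p (d n i (s n p w)) = s n (p - 1) (d n i (s n p w)) :=
    fun i hi => by
      rw [mem_range] at hi
      rw [degen_face_degen hss hlt hi.le hp, hlt n i p hi (by omega)]
  rw [sHomotopy_apply_eq hlt hgt hid (by omega), sum_range_succ, hlast,
    sum_congr rfl fun i hi => congrArg _ (hinit i hi), map_sum, two_smul]
  simp only [map_smul]
  abel

lemma neg_one_pow_smul_neg_one_pow_smul {M : Type*} [AddCommGroup M] [Module k M] (p : ℕ) (x : M) :
    (-1 : k) ^ p • (-1 : k) ^ p • x = x := by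
  rw [smul_smul, ← mul_pow, neg_one_mul, neg_neg, one_pow, one_smul]

lemma sub_smul_sHomotopy_mem_degenFiltration (hss : DegenCompDegen s)
    (hlt : FaceCompDegenOfLt d s) (hgt : FaceCompDegenOfGt d s) (hid : FaceCompDegenSelf d s)
    {n p : ℕ} (hp : p ≤ n) {x : C (n + 1)} (hx : x ∈ degenFiltration s n (p + 1)) :
    x - (-1 : k) ^ p • sHomotopy d s n p x ∈ degenFiltration s n p := by
  rw [degenFiltration_succ, Submodule.mem_sup] at hx
  obtain ⟨y, hy, _, ⟨w, rfl⟩, rfl⟩ := hx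
  set z := ∑ i ∈ range p, (-1 : k) ^ i • d n i (s n p w)
  have hdegen : s n p w - (-1 : k) ^ p • sHomotopy d s n p (s n p w) =
      -((-1 : k) ^ p • (2 : k) • s n (p - 1) z) := by
    rw [sHomotopy_degen hss hlt hgt hid hp, smul_add, neg_one_pow_smul_neg_one_pow_smul]
    abel
  rw [map_add, smul_add, add_sub_add_comm, hdegen]
  refine add_mem (sub_mem hy (Submodule.smul_mem _ _
    (sHomotopy_mem_degenFiltration hss hlt hgt hid hp hy))) (neg_mem (Submodule.smul_mem _ _ ?_))
  rcases p with _ | p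
  · simp [z]
  · exact Submodule.smul_mem _ _ (degen_mem_degenFiltration s (by omega) _)

lemma exists_sBdry_eq_of_mem_degenFiltration (hd : FaceCompFace d) (hss : DegenCompDegen s)
    (hlt : FaceCompDegenOfLt d s) (hgt : FaceCompDegenOfGt d s) (hid : FaceCompDegenSelf d s)
    {n p : ℕ} (hp : p ≤ n + 1) {x : C (n + 1)} (hx : x ∈ degenFiltration s n p)
    (hbx : sBdry d n x = 0) :
    ∃ y ∈ degenFiltration s (n + 1) (n + 2), sBdry d (n + 1) y = x := by
  induction p generalizing x with
  | zero =>
    rw [degenFiltration_zero, Submodule.mem_bot] at hx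
    exact ⟨0, zero_mem _, by rw [map_zero, hx]⟩
  | succ p ih =>
    have hstep := sub_smul_sHomotopy_mem_degenFiltration hss hlt hgt hid (by omega) hx
    rw [sHomotopy_apply, hbx, map_zero, add_zero] at hstep
    obtain ⟨y, hy, hyx⟩ := ih (by omega) hstep
      (by rw [map_sub, map_smul, sBdry_sBdry hd, hbx, smul_zero, sub_zero])
    refine ⟨(-1 : k) ^ p • s (n + 1) p x + y,
      add_mem (Submodule.smul_mem _ _ (degen_mem_degenFiltration s (by omega) x)) hy, ?_⟩
    rw [map_add, map_smul, hyx, add_sub_cancel]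

end SimplicialModule

/-- Eilenberg–Mac Lane: for a simplicial module, `(∂sₚ + sₚ∂)sₚ ≡ (−1)ᵖsₚ` modulo
`s_{p−1}(C)`, i.e. `sₚ` is a chain homotopy between `(−1)ᵖId` and `0` on the graded piece
of the degenerate filtration; consequently the degenerate subcomplex `(C^D, ∂)` is acyclic. -/
theorem stmt16 {k : Type*} [CommRing k] {C : ℕ → Type*}
    [∀ n, AddCommGroup (C n)] [∀ n, Module k (C n)]
    (d : ∀ n, ℕ → (C (n + 1) →ₗ[k] C n))
    (s : ∀ n, ℕ → (C n →ₗ[k] C (n + 1)))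
    (hd : ∀ n, ∀ i j : ℕ, i < j → j ≤ n + 2 →
      (d n i) ∘ₗ (d (n + 1) j) = (d n (j - 1)) ∘ₗ (d (n + 1) i))
    (hs : ∀ n, ∀ i j : ℕ, i ≤ j → j ≤ n →
      (s (n + 1) i) ∘ₗ (s n j) = (s (n + 1) (j + 1)) ∘ₗ (s n i))
    (hds_lt : ∀ n, ∀ i j : ℕ, i < j → j ≤ n + 1 →
      (d (n + 1) i) ∘ₗ (s (n + 1) j) = (s n (j - 1)) ∘ₗ (d n i))
    (hds_gt : ∀ n, ∀ i j : ℕ, j + 1 < i → i ≤ n + 2 →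
      (d (n + 1) i) ∘ₗ (s (n + 1) j) = (s n j) ∘ₗ (d n (i - 1)))
    -- (4): dᵢsᵢ = d_{i+1}sᵢ = Id
    (hds_id : ∀ n, ∀ i : ℕ, i ≤ n + 1 →
      (d (n + 1) i) ∘ₗ (s (n + 1) i) = LinearMap.id ∧
      (d (n + 1) (i + 1)) ∘ₗ (s (n + 1) i) = LinearMap.id) :
    -- (∂sₚ + sₚ∂)sₚ ≡ (−1)ᵖ sₚ  mod  s_{p−1}(C)
    (∀ n, ∀ p : ℕ, p ≤ n → ∀ x : C n,
      ((sBdry d (n + 1)) ((s (n + 1) p) ((s n p) x)) +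
          (s n p) ((sBdry d n) ((s n p) x))) - ((-1 : k) ^ p) • ((s n p) x) ∈
        LinearMap.range (s n (p - 1))) ∧
    -- the degenerate subcomplex is acyclic
    (∀ n, ∀ x : C (n + 1),
      x ∈ (⨆ i ∈ Finset.range (n + 1), LinearMap.range (s n i)) →
      sBdry d n x = 0 →
      ∃ y ∈ (⨆ i ∈ Finset.range (n + 2), LinearMap.range (s (n + 1) i)),
        sBdry d (n + 1) y = x) := by
  have hd' : FaceCompFace d := fun n i j h h' => LinearMap.congr_fun (hd n i j h h')
  have hs' : DegenCompDegen s := fun n i j h h' => LinearMap.congr_fun (hs n i j h h')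
  have hlt : FaceCompDegenOfLt d s := fun n i j h h' => LinearMap.congr_fun (hds_lt n i j h h')
  have hgt : FaceCompDegenOfGt d s := fun n i j h h' => LinearMap.congr_fun (hds_gt n i j h h')
  have hid : FaceCompDegenSelf d s := fun n i h x =>
    ⟨LinearMap.congr_fun (hds_id n i h).1 x, LinearMap.congr_fun (hds_id n i h).2 x⟩
  refine ⟨fun n p hp x => ?_, fun n x hx hbx =>
    exists_sBdry_eq_of_mem_degenFiltration hd' hs' hlt hgt hid le_rfl hx hbx⟩
  rw [← sHomotopy_apply, sHomotopy_degen hs' hlt hgt hid hp, add_sub_cancel_left, ← map_smul]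
  exact LinearMap.mem_range_self _ _
end
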